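/- arXiv:2204.03292 — 9 statements merged into one kernel-verified Lean document; each statement's English description precedes it below -/
import Mathlib

section
/- There exist constants C > 0 and K ∈ ℕ such that for every integer k ≥ K there is a unique real number μ_k in the interval (π(k − 1/2) − 1/2, π(k − 1/2) + 1/2) satisfying cosh(μ_k)·cos(μ_k) + 1 = 0, and this root satisfies |μ_k − π(k − 1/2)| ≤ C·e^{−π(k − 1/2)}. -/
/-!
Write `μ = a + t` with `a = π (k - 1/2)`. Then `cos μ = (-1)^k sin t`, so the characteristic
equation becomes `cosh (a + t) * sin t = -(-1)^k`. For `|t| ≤ 1/2` the left side is strictly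
increasing in `t` and, once `a ≥ 4`, runs from below `-1` to above `1`; this gives the unique root.
At the root `|sin t| = 1 / cosh (a + t) ≤ 2 e^{-(a + t)}`, and Jordan's inequality
`|t| ≤ (π/2) |sin t|` turns this into `|t| ≤ π e^{1/2} e^{-a}`.
-/

open Real

namespace Real

lemma cos_pi_mul_nat_sub_half_add (k : ℕ) (t : ℝ) :
    cos (π * ((k : ℝ) - 1/2) + t) = (-1) ^ k * sin t := by
  rw [show π * ((k : ℝ) - 1/2) + t = k * π - (π / 2 - t) by ring, cos_nat_mul_pi_sub,
    cos_pi_div_two_sub]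

lemma cosh_mul_cos_add_one_eq_zero_iff (k : ℕ) (μ : ℝ) :
    cosh μ * cos μ + 1 = 0 ↔ cosh μ * sin (μ - π * ((k : ℝ) - 1/2)) = -(-1) ^ k := by
  have hcos := cos_pi_mul_nat_sub_half_add k (μ - π * ((k : ℝ) - 1/2))
  rw [add_sub_cancel] at hcos
  rw [hcos]
  rcases neg_one_pow_eq_or ℝ k with h | h <;> rw [h] <;> constructor <;> intro <;> linarith

lemma abs_sinh_le_cosh (x : ℝ) : |sinh x| ≤ cosh x := by
  rw [sinh_eq, cosh_eq]
  exact abs_le.mpr ⟨by linarith [exp_pos x], by linarith [exp_pos (-x)]⟩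

lemma exp_div_two_le_cosh (x : ℝ) : exp x / 2 ≤ cosh x := by
  rw [cosh_eq]
  linarith [exp_pos (-x)]

/-- On `[-1/2, 1/2]` we have `|sin t| < cos t`, which beats `|sinh| ≤ cosh` in the derivative
`sinh (a + t) * sin t + cosh (a + t) * cos t`. -/
lemma strictMonoOn_cosh_add_mul_sin (a : ℝ) :
    StrictMonoOn (fun t => cosh (a + t) * sin t) (Set.Icc (-(1/2)) (1/2)) := by
  refine strictMonoOn_of_hasDerivWithinAt_pos (convex_Icc _ _) (by fun_prop)
    (f' := fun t => sinh (a + t) * sin t + cosh (a + t) * cos t) (fun t _ => ?_) ?_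
  · have h : HasDerivAt (fun t => cosh (a + t) * sin t)
        (sinh (a + t) * sin t + cosh (a + t) * cos t) t := by
      simpa using ((hasDerivAt_id' t).const_add a).cosh.fun_mul (hasDerivAt_sin t)
    exact h.hasDerivWithinAt
  · rintro t ht
    rw [interior_Icc] at ht
    have hcos : 7/8 ≤ cos t := by nlinarith [one_sub_sq_div_two_le_cos (x := t), ht.1, ht.2]
    have hsin : |sin t| ≤ 1/2 := abs_sin_le_abs.trans (abs_le.mpr ⟨ht.1.le, ht.2.le⟩)
    have hsinh := abs_le.mp (abs_sinh_le_cosh (a + t))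
    have hs := abs_le.mp hsin
    nlinarith [cosh_pos (a + t)]

lemma one_lt_cosh_mul_sin_half {x : ℝ} (hx : 7/2 ≤ x) : 1 < cosh x * sin (1/2) := by
  have hsin : 23/48 < sin (1/2) := by linarith [sin_gt_sub_cube (x := 1/2) (by norm_num)]
  have hcosh : 9/4 ≤ cosh x := by linarith [exp_div_two_le_cosh x, add_one_le_exp x]
  nlinarith

lemma existsUnique_cosh_add_mul_sin_eq {a c : ℝ} (ha : 4 ≤ a) (hc : |c| ≤ 1) :
    ∃! t, t ∈ Set.Ioo (-(1/2) : ℝ) (1/2) ∧ cosh (a + t) * sin t = c := by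
  have hleft := one_lt_cosh_mul_sin_half (x := a + -(1/2)) (by linarith)
  have hright := one_lt_cosh_mul_sin_half (x := a + 1/2) (by linarith)
  have hc' := abs_le.mp hc
  obtain ⟨t, ht, hft⟩ := intermediate_value_Ioo (show -(1/2) ≤ (1/2 : ℝ) by norm_num)
    (f := fun t => cosh (a + t) * sin t) (by fun_prop)
    (show c ∈ Set.Ioo _ _ from ⟨by rw [sin_neg]; linarith, by linarith⟩)
  exact ⟨t, ⟨ht, hft⟩, fun s ⟨hs, hfs⟩ => (strictMonoOn_cosh_add_mul_sin a).injOn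
    (Set.Ioo_subset_Icc_self hs) (Set.Ioo_subset_Icc_self ht) (hfs.trans hft.symm)⟩

lemma abs_le_pi_mul_exp_of_abs_cosh_add_mul_sin_eq_one {a t : ℝ} (ht : |t| ≤ π / 2)
    (h : |cosh (a + t) * sin t| = 1) : |t| ≤ π * exp (-(a + t)) := by
  rw [abs_mul, abs_of_pos (cosh_pos _)] at h
  have hsin : |sin t| ≤ 2 * exp (-(a + t)) := by
    have h2 : exp (a + t) * |sin t| ≤ 2 := by
      nlinarith [exp_div_two_le_cosh (a + t), abs_nonneg (sin t)]
    rw [exp_neg, ← div_eq_mul_inv, le_div_iff₀ (exp_pos _)]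
    linarith
  calc |t| = π / 2 * (2 / π * |t|) := by field_simp
    _ ≤ π / 2 * (2 * exp (-(a + t))) :=
      mul_le_mul_of_nonneg_left ((mul_abs_le_abs_sin ht).trans hsin) (by positivity)
    _ = π * exp (-(a + t)) := by ring

end Real

/-- There exist constants `C > 0` and `K ∈ ℕ` such that for every integer `k ≥ K` there is a
unique real number `μ` in the interval `(π(k − 1/2) − 1/2, π(k − 1/2) + 1/2)` satisfying
`cosh μ · cos μ + 1 = 0`, and this root satisfies `|μ − π(k − 1/2)| ≤ C·e^{−π(k − 1/2)}`. -/
theorem beam_characteristic_roots_asymptotics :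
    ∃ C > (0:ℝ), ∃ K : ℕ, ∀ k : ℕ, K ≤ k →
      (∃! μ : ℝ, μ ∈ Set.Ioo (π * ((k:ℝ) - 1/2) - 1/2) (π * ((k:ℝ) - 1/2) + 1/2) ∧
          Real.cosh μ * Real.cos μ + 1 = 0) ∧
      (∀ μ : ℝ, μ ∈ Set.Ioo (π * ((k:ℝ) - 1/2) - 1/2) (π * ((k:ℝ) - 1/2) + 1/2) →
          Real.cosh μ * Real.cos μ + 1 = 0 →
          |μ - π * ((k:ℝ) - 1/2)| ≤ C * Real.exp (-(π * ((k:ℝ) - 1/2)))) := by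
  refine ⟨π * exp (1/2), by positivity, 2, fun k hk => ?_⟩
  set a := π * ((k:ℝ) - 1/2)
  have ha : 4 ≤ a := by
    have : (2:ℝ) ≤ k := by exact_mod_cast hk
    simp only [a]
    nlinarith [pi_gt_three]
  have hsign : |(-1 : ℝ) ^ k| = 1 := by simp
  have hshift (μ : ℝ) : μ ∈ Set.Ioo (a - 1/2) (a + 1/2) ↔ μ - a ∈ Set.Ioo (-(1/2)) (1/2) := by
    rw [Set.sub_mem_Ioo_iff_left, neg_add_eq_sub, add_comm]
  have hroot (μ : ℝ) :
      cosh μ * cos μ + 1 = 0 ↔ cosh (a + (μ - a)) * sin (μ - a) = -(-1) ^ k := by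
    rw [add_sub_cancel]
    exact cosh_mul_cos_add_one_eq_zero_iff k μ
  refine ⟨(Equiv.subRight a).existsUnique_congr (fun μ => by rw [hshift, hroot]; rfl) |>.mpr
    (existsUnique_cosh_add_mul_sin_eq ha (by rw [abs_neg, hsign])), fun μ hμ hμroot => ?_⟩
  rw [hshift] at hμ
  rw [hroot] at hμroot
  have hbound := abs_le_pi_mul_exp_of_abs_cosh_add_mul_sin_eq_one
    ((abs_lt.mpr hμ).le.trans (by linarith [pi_gt_three])) (by rw [hμroot, abs_neg, hsign])
  calc |μ - a| ≤ π * exp (-(a + (μ - a))) := hbound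
    _ ≤ π * exp (1/2 - a) := by gcongr; linarith [hμ.1]
    _ = π * exp (1/2) * exp (-a) := by rw [mul_assoc, ← exp_add, sub_eq_add_neg]
end

section
/- For μ > 0 define f_μ, g_μ : [0,1] → ℝ by f_μ(ξ) = (cosh μ + cos μ)(cosh(μξ) − cos(μξ)) − (sinh μ − sin μ)(sinh(μξ) − sin(μξ)) and g_μ(ξ) = (cosh μ + cos μ)(cosh(μξ) + cos(μξ)) − (sinh μ − sin μ)(sinh(μξ) + sin(μξ)). Then for every ε > 0 there exists M > 0 such that for every μ ≥ M with cosh(μ)cos(μ) + 1 = 0 one has ‖f_μ‖_{L²(0,1)} > 0 and | ‖g_μ‖_{L²(0,1)} / ‖f_μ‖_{L²(0,1)} − 1 | < ε. In particular the ratio of L² norms tends to 1 along the positive roots of cosh(μ)cos(μ) + 1 = 0 as μ → ∞. -/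
/-!
Write `A = cosh μ + cos μ` and `B = sinh μ - sin μ`. Then `g_μ - f_μ = 2 (A cos - B sin)(μξ)` and
`g_μ + f_μ = 2 (A cosh - B sinh)(μξ)`, so `g_μ² - f_μ²` has an explicit primitive built from
`sin·cosh`, `cos·sinh` and `sin·sinh`. It vanishes at `ξ = 0`, and at `ξ = 1` it is a multiple of
`cosh μ cos μ + 1`. Hence `‖g_μ‖ = ‖f_μ‖` at every root and the ratio is exactly `1`.
It remains that `f_μ ≠ 0`: `f_μ(1) = 2 sinh μ sin μ`, and `sin μ = 0` would force `cosh μ = 1`.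
-/

/-- The first eigenvector component of the clamped-free Euler–Bernoulli beam. -/
noncomputable def fEig (μ ξ : ℝ) : ℝ :=
  (Real.cosh μ + Real.cos μ) * (Real.cosh (μ * ξ) - Real.cos (μ * ξ)) -
    (Real.sinh μ - Real.sin μ) * (Real.sinh (μ * ξ) - Real.sin (μ * ξ))

/-- The second eigenvector component of the clamped-free Euler–Bernoulli beam. -/
noncomputable def gEig (μ ξ : ℝ) : ℝ :=
  (Real.cosh μ + Real.cos μ) * (Real.cosh (μ * ξ) + Real.cos (μ * ξ)) -
    (Real.sinh μ - Real.sin μ) * (Real.sinh (μ * ξ) + Real.sin (μ * ξ))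

/-- The `L²(0,1)` norm of a real function on the unit interval. -/
noncomputable def l2Norm01 (h : ℝ → ℝ) : ℝ :=
  Real.sqrt (∫ ξ in (0:ℝ)..1, (h ξ) ^ 2)


open Real

lemma continuous_fEig (μ : ℝ) : Continuous (fEig μ) := by
  unfold fEig; fun_prop

lemma continuous_gEig (μ : ℝ) : Continuous (gEig μ) := by
  unfold gEig; fun_prop

lemma l2Norm01_pos {h : ℝ → ℝ} (hc : Continuous h) {ξ : ℝ} (hξ : ξ ∈ Set.Icc (0 : ℝ) 1)
    (hne : h ξ ≠ 0) : 0 < l2Norm01 h :=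
  Real.sqrt_pos.mpr <| intervalIntegral.integral_pos zero_lt_one (hc.pow 2).continuousOn
    (fun _ _ ↦ sq_nonneg _) ⟨ξ, hξ, by positivity⟩

noncomputable def trigHypPrimitive (A B μ ξ : ℝ) : ℝ :=
  2 / μ * (A ^ 2 * (sin (μ * ξ) * cosh (μ * ξ) + cos (μ * ξ) * sinh (μ * ξ))
    - 2 * A * B * (sin (μ * ξ) * sinh (μ * ξ))
    + B ^ 2 * (sin (μ * ξ) * cosh (μ * ξ) - cos (μ * ξ) * sinh (μ * ξ)))

lemma hasDerivAt_trigHypPrimitive (A B : ℝ) {μ : ℝ} (hμ : μ ≠ 0) (ξ : ℝ) :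
    HasDerivAt (trigHypPrimitive A B μ)
      (4 * (A * cos (μ * ξ) - B * sin (μ * ξ)) * (A * cosh (μ * ξ) - B * sinh (μ * ξ))) ξ := by
  have hlin : HasDerivAt (fun ξ : ℝ ↦ μ * ξ) μ ξ := by
    simpa using (hasDerivAt_id ξ).const_mul μ
  have hs := hlin.sin
  have hc := hlin.cos
  have hsh := hlin.sinh
  have hch := hlin.cosh
  have h := ((((hs.mul hch).add (hc.mul hsh)).const_mul (A ^ 2)).sub
      ((hs.mul hsh).const_mul (2 * A * B)) |>.add
      (((hs.mul hch).sub (hc.mul hsh)).const_mul (B ^ 2))).const_mul (2 / μ)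
  refine h.congr_deriv ?_
  field_simp
  ring

lemma trigHypPrimitive_zero (A B μ : ℝ) : trigHypPrimitive A B μ 0 = 0 := by
  simp [trigHypPrimitive]

lemma gEig_sq_sub_fEig_sq (μ ξ : ℝ) :
    gEig μ ξ ^ 2 - fEig μ ξ ^ 2 =
      4 * ((cosh μ + cos μ) * cos (μ * ξ) - (sinh μ - sin μ) * sin (μ * ξ)) *
        ((cosh μ + cos μ) * cosh (μ * ξ) - (sinh μ - sin μ) * sinh (μ * ξ)) := by
  unfold fEig gEig; ring

lemma trigHypPrimitive_one_of_cosh_mul_cos_add_one_eq_zero {μ : ℝ}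
    (hroot : cosh μ * cos μ + 1 = 0) :
    trigHypPrimitive (cosh μ + cos μ) (sinh μ - sin μ) μ 1 = 0 := by
  rw [trigHypPrimitive, mul_one]
  linear_combination 2 / μ * (sin μ * cosh μ + cos μ * sinh μ) *
    (2 * hroot + cosh_sq_sub_sinh_sq μ + sin_sq_add_cos_sq μ)

lemma integral_gEig_sq_eq_integral_fEig_sq {μ : ℝ} (hμ : μ ≠ 0)
    (hroot : cosh μ * cos μ + 1 = 0) :
    ∫ ξ in (0 : ℝ)..1, gEig μ ξ ^ 2 = ∫ ξ in (0 : ℝ)..1, fEig μ ξ ^ 2 := by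
  have hg : IntervalIntegrable (fun ξ ↦ gEig μ ξ ^ 2) MeasureTheory.volume 0 1 :=
    ((continuous_gEig μ).pow 2).intervalIntegrable 0 1
  have hf : IntervalIntegrable (fun ξ ↦ fEig μ ξ ^ 2) MeasureTheory.volume 0 1 :=
    ((continuous_fEig μ).pow 2).intervalIntegrable 0 1
  have hdiff : ∫ ξ in (0 : ℝ)..1, (gEig μ ξ ^ 2 - fEig μ ξ ^ 2) = 0 := by
    simp_rw [gEig_sq_sub_fEig_sq]
    rw [intervalIntegral.integral_eq_sub_of_hasDerivAt
        (fun ξ _ ↦ hasDerivAt_trigHypPrimitive _ _ hμ ξ)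
        (Continuous.intervalIntegrable (by fun_prop) _ _),
      trigHypPrimitive_one_of_cosh_mul_cos_add_one_eq_zero hroot, trigHypPrimitive_zero, sub_zero]
  rw [intervalIntegral.integral_sub hg hf] at hdiff
  linarith

lemma fEig_one (μ : ℝ) : fEig μ 1 = 2 * sinh μ * sin μ := by
  unfold fEig
  rw [mul_one]
  linear_combination cosh_sq_sub_sinh_sq μ - sin_sq_add_cos_sq μ

lemma sin_ne_zero_of_cosh_mul_cos_add_one_eq_zero {μ : ℝ} (hμ : μ ≠ 0)
    (hroot : cosh μ * cos μ + 1 = 0) : sin μ ≠ 0 := by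
  intro hsin
  have hcos : cos μ ^ 2 = 1 := by nlinarith [sin_sq_add_cos_sq μ]
  have hcosh : cosh μ ^ 2 = 1 := by
    linear_combination (cosh μ * cos μ - 1) * hroot - cosh μ ^ 2 * hcos
  nlinarith [one_lt_cosh.mpr hμ]

/-- For every `ε > 0` there exists `M > 0` such that for every root `μ ≥ M` of
`cosh(μ)cos(μ) + 1 = 0` one has `‖f_μ‖ > 0` and `|‖g_μ‖/‖f_μ‖ − 1| < ε`:
the ratio of `L²` norms of the eigenvector components tends to `1`. -/
theorem beam_eigenvector_norm_ratio_tendsto_one :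
    ∀ ε > (0:ℝ), ∃ M > (0:ℝ), ∀ μ : ℝ, M ≤ μ →
      Real.cosh μ * Real.cos μ + 1 = 0 →
      0 < l2Norm01 (fEig μ) ∧
      |l2Norm01 (gEig μ) / l2Norm01 (fEig μ) - 1| < ε := by
  intro ε hε
  refine ⟨1, one_pos, fun μ hμ hroot ↦ ?_⟩
  have hμ0 : μ ≠ 0 := (one_pos.trans_le hμ).ne'
  have hsinh : sinh μ ≠ 0 := sinh_ne_zero.mpr hμ0
  have hsin := sin_ne_zero_of_cosh_mul_cos_add_one_eq_zero hμ0 hroot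
  have hf : 0 < l2Norm01 (fEig μ) :=
    l2Norm01_pos (continuous_fEig μ) (Set.right_mem_Icc.mpr zero_le_one)
      (by rw [fEig_one]; positivity)
  have hgf : l2Norm01 (gEig μ) = l2Norm01 (fEig μ) := by
    unfold l2Norm01
    rw [integral_gEig_sq_eq_integral_fEig_sq hμ0 hroot]
  refine ⟨hf, ?_⟩
  rwa [hgf, div_self hf.ne', sub_self, abs_zero]
end

section
/- Let β, κ > 0 and let (μ_k)_{k≥1} be the strictly increasing enumeration of the positive solutions of cosh(μ)cos(μ) + 1 = 0, and set λ_k = √(κ/β)·μ_k². Then λ_{k+1} − λ_k → ∞ as k → ∞, and consequently inf{ |λ_j − λ_k| : j, k ≥ 1, j ≠ k } > 0. -/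
/-!
A positive root `x` of `cosh x * cos x + 1 = 0` satisfies `cos x = -1 / cosh x`, so it lies beyond
`π / 2 > 3 / 2`, where `cosh ≥ 9/5`; thus `|cos x| ≤ 5/9`. Between two such roots, Rolle's theorem
applied to `cos t + 1 / cosh t` yields a point `ξ` with `sin ξ = -sinh ξ / cosh ξ ^ 2`, hence
`|sin ξ| ≤ 5/9`; if the roots were closer than `1/4`, also `|cos ξ| ≤ 5/9 + 1/4`, contradicting
`sin² + cos² = 1`. So `μ_{k+1} - μ_k ≥ 1/4`, and then
`λ_{k+1} - λ_k = √(κ/β) (μ_{k+1} - μ_k)(μ_{k+1} + μ_k) ≥ √(κ/β) (2k + 1) / 16`.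
-/

open Real Filter

lemma pi_div_two_lt_of_cosh_mul_cos_add_one_eq_zero {x : ℝ} (hx0 : 0 < x)
    (hx : cosh x * cos x + 1 = 0) : π / 2 < x := by
  by_contra! hxπ
  have : 0 ≤ cos x := cos_nonneg_of_mem_Icc ⟨by linarith [pi_pos], hxπ⟩
  nlinarith [cosh_pos x]

lemma nine_fifths_le_cosh {x : ℝ} (hx : 3 / 2 ≤ x) : 9 / 5 ≤ cosh x := by
  have := quadratic_le_exp_of_nonneg (by linarith : 0 ≤ x)
  rw [cosh_eq]
  nlinarith [exp_pos (-x)]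

theorem quarter_le_sub_of_cosh_mul_cos_add_one_eq_zero {x y : ℝ} (hx0 : 0 < x) (hxy : x < y)
    (hx : cosh x * cos x + 1 = 0) (hy : cosh y * cos y + 1 = 0) : 1 / 4 ≤ y - x := by
  by_contra! hyx
  have hsech : ∀ t, cosh t * cos t + 1 = 0 → cos t + (cosh t)⁻¹ = 0 := fun t ht => by
    field_simp [(cosh_pos t).ne']
    linarith
  obtain ⟨ξ, ⟨hxξ, hξy⟩, hξ⟩ := exists_hasDerivAt_eq_zero hxy
    (f := fun t => cos t + (cosh t)⁻¹)
    (continuous_cos.add (continuous_cosh.inv₀ fun t => (cosh_pos t).ne')).continuousOn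
    (by simp only [hsech x hx, hsech y hy])
    (fun t _ => (hasDerivAt_cos t).add ((hasDerivAt_cosh t).inv (cosh_pos t).ne'))
  have hx32 : 3 / 2 < x := by
    linarith [pi_gt_three, pi_div_two_lt_of_cosh_mul_cos_add_one_eq_zero hx0 hx]
  have hcoshx := nine_fifths_le_cosh hx32.le
  have hcoshξ := nine_fifths_le_cosh (hx32.trans hxξ).le
  have hsin : sin ξ ^ 2 ≤ (5 / 9) ^ 2 := by
    have : sin ξ = -sinh ξ / cosh ξ ^ 2 := by linarith
    rw [this, div_pow, neg_sq, sinh_sq, div_le_iff₀ (by positivity)]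
    nlinarith [sq_nonneg (5 / 9 * cosh ξ ^ 2 - 9 / 10)]
  have hcosx : |cos x| ≤ 5 / 9 := by
    rw [eq_neg_of_add_eq_zero_left (hsech x hx), abs_neg, abs_of_pos (by positivity)]
    exact inv_le_of_inv_le₀ (by norm_num) (by linarith)
  have hcos : |cos ξ| ≤ 5 / 9 + 1 / 4 := by
    have := abs_cos_sub_cos_le ξ x
    rw [abs_of_pos (by linarith : 0 < ξ - x)] at this
    linarith [abs_sub_abs_le_abs_sub (cos ξ) (cos x)]
  nlinarith [sin_sq_add_cos_sq ξ, sq_abs (cos ξ), abs_nonneg (cos ξ)]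

lemma add_mul_le_of_forall_le_sub_succ {a : ℕ → ℝ} {δ : ℝ} (ha : ∀ k, δ ≤ a (k + 1) - a k)
    (k : ℕ) : a 0 + k * δ ≤ a k := by
  induction k with
  | zero => simp
  | succ k ih => push_cast; linarith [ha k]

lemma mul_le_sq_sub_sq_of_forall_le_sub_succ {a : ℕ → ℝ} {δ : ℝ} (hδ : 0 ≤ δ) (h0 : 0 ≤ a 0)
    (ha : ∀ k, δ ≤ a (k + 1) - a k) (k : ℕ) : δ ^ 2 * (2 * k + 1) ≤ a (k + 1) ^ 2 - a k ^ 2 := by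
  have hsum : δ * (2 * k + 1) ≤ a (k + 1) + a k := by
    have := add_mul_le_of_forall_le_sub_succ ha k
    have := add_mul_le_of_forall_le_sub_succ ha (k + 1)
    push_cast at this
    linarith
  calc δ ^ 2 * (2 * k + 1) = δ * (δ * (2 * k + 1)) := by ring
    _ ≤ δ * (a (k + 1) + a k) := mul_le_mul_of_nonneg_left hsum hδ
    _ ≤ (a (k + 1) - a k) * (a (k + 1) + a k) :=
        mul_le_mul_of_nonneg_right (ha k) ((by positivity : 0 ≤ δ * (2 * k + 1)).trans hsum)
    _ = a (k + 1) ^ 2 - a k ^ 2 := by ring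

lemma le_abs_sub_of_forall_le_sub_succ {α : Type*} [AddCommGroup α] [LinearOrder α]
    [IsOrderedAddMonoid α] {g : ℕ → α} {ε : α} (hε : 0 ≤ ε) (hg : ∀ k, ε ≤ g (k + 1) - g k)
    {j k : ℕ} (hjk : j ≠ k) : ε ≤ |g j - g k| := by
  wlog hkj : k < j generalizing j k
  · rw [abs_sub_comm]
    exact this hjk.symm (hjk.lt_or_gt.resolve_right hkj)
  have hmono : Monotone g := monotone_nat_of_le_succ fun n => by
    simpa using hε.trans (hg n)
  calc ε ≤ g (k + 1) - g k := hg k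
    _ ≤ g j - g k := sub_le_sub_right (hmono hkj) _
    _ ≤ |g j - g k| := le_abs_self _

theorem beam_spectral_gap_general (β κ : ℝ) (hβ : 0 < β) (hκ : 0 < κ)
    (μ : ℕ → ℝ) (hmono : StrictMono μ)
    (hroot : ∀ k : ℕ, 0 < μ k ∧ Real.cosh (μ k) * Real.cos (μ k) + 1 = 0)
    (lam : ℕ → ℝ) (hlam : ∀ k : ℕ, lam k = Real.sqrt (κ / β) * (μ k) ^ 2) :
    Filter.Tendsto (fun k : ℕ => lam (k + 1) - lam k) Filter.atTop Filter.atTop ∧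
    0 < sInf {d : ℝ | ∃ j k : ℕ, j ≠ k ∧ d = |lam j - lam k|} := by
  have hc : 0 < √(κ / β) := sqrt_pos.mpr (div_pos hκ hβ)
  have hμ_gap (k : ℕ) : 1 / 4 ≤ μ (k + 1) - μ k :=
    quarter_le_sub_of_cosh_mul_cos_add_one_eq_zero (hroot k).1 (hmono k.lt_succ_self)
      (hroot k).2 (hroot (k + 1)).2
  have hlam_gap (k : ℕ) : √(κ / β) * (1 / 4) ^ 2 * (2 * k + 1) ≤ lam (k + 1) - lam k := by
    rw [hlam, hlam, ← mul_sub, mul_assoc]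
    exact mul_le_mul_of_nonneg_left
      (mul_le_sq_sub_sq_of_forall_le_sub_succ (by norm_num) (hroot 0).1.le hμ_gap k) hc.le
  refine ⟨tendsto_atTop_mono hlam_gap ?_, ?_⟩
  · have h2k : Tendsto (fun k : ℕ => 2 * (k : ℝ) + 1) atTop atTop :=
      tendsto_atTop_add_const_right _ _ (tendsto_natCast_atTop_atTop.const_mul_atTop two_pos)
    exact h2k.const_mul_atTop (by positivity)
  · have hε : 0 < √(κ / β) * (1 / 4) ^ 2 := by positivity
    refine hε.trans_le (le_csInf ⟨_, 0, 1, zero_ne_one, rfl⟩ ?_)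
    rintro d ⟨j, k, hjk, rfl⟩
    refine le_abs_sub_of_forall_le_sub_succ hε.le (fun n => ?_) hjk
    exact (le_mul_of_one_le_right hε.le (by linarith [n.cast_nonneg (α := ℝ)])).trans (hlam_gap n)

/-- If `(μ_k)` is the strictly increasing enumeration of the positive solutions of
`cosh(μ)cos(μ) + 1 = 0` and `λ_k = √(κ/β)·μ_k²`, then `λ_{k+1} − λ_k → ∞` and the
infimum of the mutual gaps `|λ_j − λ_k|`, `j ≠ k`, is positive. -/
theorem beam_spectral_gap (β κ : ℝ) (hβ : 0 < β) (hκ : 0 < κ)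
    (μ : ℕ → ℝ) (hmono : StrictMono μ)
    (hroot : ∀ k : ℕ, 0 < μ k ∧ Real.cosh (μ k) * Real.cos (μ k) + 1 = 0)
    (hsurj : ∀ x : ℝ, 0 < x → Real.cosh x * Real.cos x + 1 = 0 → ∃ k : ℕ, μ k = x)
    (lam : ℕ → ℝ) (hlam : ∀ k : ℕ, lam k = Real.sqrt (κ / β) * (μ k) ^ 2) :
    Filter.Tendsto (fun k : ℕ => lam (k + 1) - lam k) Filter.atTop Filter.atTop ∧
    0 < sInf {d : ℝ | ∃ j k : ℕ, j ≠ k ∧ d = |lam j - lam k|} :=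
  beam_spectral_gap_general β κ hβ hκ μ hmono hroot lam hlam
end

section
/- Let β, κ, γ > 0, ω ∈ ℝ, u₁, u₂ ∈ ℂ, and let f, g : [0,1] → ℂ be twice continuously differentiable functions satisfying (iω + γ/β)·f(ξ) + κ·g''(ξ) = 0 and −(1/β)·f''(ξ) + iω·g(ξ) = 0 for all ξ ∈ [0,1], together with the boundary conditions f(0) = β·u₁, f'(0) = β·u₂, g(1) = 0, g'(1) = 0. Then (1/β)(iω + γ/β)·∫₀¹|f(ξ)|²dξ − iκω·∫₀¹|g(ξ)|²dξ = κ·g'(0)·conj(u₁) − κ·g(0)·conj(u₂). -/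
/-!
The sesquilinear Wronskian `W = (κ/β)(g·conj f' − g'·conj f)` has derivative
`(κ/β)(g·conj f'' − g''·conj f)`, and the two beam equations turn this into the energy density
`(1/β)(iω + γ/β)|f|² − iκω|g|²`. Integrating over `[0,1]`, `W(1) = 0` by the free-end conditions
and `−W(0)` is the right-hand side by the input conditions at `ξ = 0`.
-/

open Set ComplexConjugate

theorem intervalIntegral.integral_eq_sub_of_hasDerivWithinAt_Icc {E : Type*}
    [NormedAddCommGroup E] [NormedSpace ℝ E] [CompleteSpace E] {F F' : ℝ → E} {a b : ℝ}
    (hab : a ≤ b) (hF : ∀ x ∈ Icc a b, HasDerivWithinAt F (F' x) (Icc a b) x)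
    (hF' : ContinuousOn F' (Icc a b)) :
    ∫ x in a..b, F' x = F b - F a :=
  integral_eq_sub_of_hasDerivAt_of_le hab (fun x hx => (hF x hx).continuousWithinAt)
    (fun x hx => (hF x (Ioo_subset_Icc_self hx)).hasDerivAt (Icc_mem_nhds hx.1 hx.2))
    (hF'.intervalIntegrable_of_Icc hab)

theorem HasDerivWithinAt.mul_conj_sub_mul_conj {𝕜 : Type*} [RCLike 𝕜]
    {f f' f'' g g' g'' : ℝ → 𝕜} {s : Set ℝ} {x : ℝ}
    (hf' : HasDerivWithinAt f (f' x) s x) (hf'' : HasDerivWithinAt f' (f'' x) s x)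
    (hg' : HasDerivWithinAt g (g' x) s x) (hg'' : HasDerivWithinAt g' (g'' x) s x) :
    HasDerivWithinAt (fun ξ => g ξ * conj (f' ξ) - g' ξ * conj (f ξ))
      (g x * conj (f'' x) - g'' x * conj (f x)) s x :=
  ((hg'.mul hf''.star).sub (hg''.mul hf'.star)).congr_deriv
    (by simp only [starRingEnd_apply]; ring)

theorem beam_mul_conj_sub_mul_conj_eq_energy_density {β κ γ ω : ℝ} (hβ : β ≠ 0) {f f'' g g'' : ℂ}
    (hode1 : (Complex.I * ω + γ / β) * f + κ * g'' = 0)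
    (hode2 : -(1 / (β:ℂ)) * f'' + Complex.I * ω * g = 0) :
    κ / β * (g * conj f'' - g'' * conj f) =
      1 / β * (Complex.I * ω + γ / β) * (‖f‖ ^ 2 : ℝ) - Complex.I * κ * ω * (‖g‖ ^ 2 : ℝ) := by
  have hβ0 : (β:ℂ) ≠ 0 := by exact_mod_cast hβ
  have hf''_eq : f'' = β * Complex.I * ω * g := by
    field_simp at hode2
    linear_combination -hode2
  rw [Complex.ofReal_pow, Complex.ofReal_pow, ← Complex.mul_conj', ← Complex.mul_conj', hf''_eq]
  simp only [map_mul, Complex.conj_ofReal, Complex.conj_I]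
  linear_combination (-conj f / β) * hode1 - Complex.I * κ * ω * g * conj g * mul_inv_cancel₀ hβ0

theorem intervalIntegral.integral_mul_sq_norm_sub_mul_sq_norm {a b : ℝ} {f g : ℝ → ℂ}
    (hf : ContinuousOn f (uIcc a b)) (hg : ContinuousOn g (uIcc a b)) (c d : ℂ) :
    ∫ x in a..b, (c * (‖f x‖ ^ 2 : ℝ) - d * (‖g x‖ ^ 2 : ℝ)) =
      c * ↑(∫ x in a..b, ‖f x‖ ^ 2) - d * ↑(∫ x in a..b, ‖g x‖ ^ 2) := by
  have hint : ∀ {h : ℝ → ℂ}, ContinuousOn h (uIcc a b) →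
      IntervalIntegrable (fun x => ((‖h x‖ ^ 2 : ℝ) : ℂ)) MeasureTheory.volume a b :=
    fun hh => (Complex.continuous_ofReal.comp_continuousOn (hh.norm.pow 2)).intervalIntegrable
  rw [integral_sub ((hint hf).const_mul c) ((hint hg).const_mul d), integral_const_mul,
    integral_const_mul, integral_ofReal, integral_ofReal]

theorem beam_frequency_energy_identity_general
    (β κ γ : ℝ) (hβ : 0 < β) (ω : ℝ) (u₁ u₂ : ℂ)
    (f f' f'' g g' g'' : ℝ → ℂ)
    (hf' : ∀ ξ ∈ Set.Icc (0:ℝ) 1, HasDerivWithinAt f (f' ξ) (Set.Icc (0:ℝ) 1) ξ)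
    (hf'' : ∀ ξ ∈ Set.Icc (0:ℝ) 1, HasDerivWithinAt f' (f'' ξ) (Set.Icc (0:ℝ) 1) ξ)
    (hg' : ∀ ξ ∈ Set.Icc (0:ℝ) 1, HasDerivWithinAt g (g' ξ) (Set.Icc (0:ℝ) 1) ξ)
    (hg'' : ∀ ξ ∈ Set.Icc (0:ℝ) 1, HasDerivWithinAt g' (g'' ξ) (Set.Icc (0:ℝ) 1) ξ)
    (hode1 : ∀ ξ ∈ Set.Icc (0:ℝ) 1,
      (Complex.I * (ω:ℂ) + (γ:ℂ) / (β:ℂ)) * f ξ + (κ:ℂ) * g'' ξ = 0)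
    (hode2 : ∀ ξ ∈ Set.Icc (0:ℝ) 1,
      -(1 / (β:ℂ)) * f'' ξ + Complex.I * (ω:ℂ) * g ξ = 0)
    (hbc1 : f 0 = (β:ℂ) * u₁) (hbc2 : f' 0 = (β:ℂ) * u₂)
    (hbc3 : g 1 = 0) (hbc4 : g' 1 = 0) :
    (1 / (β:ℂ)) * (Complex.I * (ω:ℂ) + (γ:ℂ) / (β:ℂ)) *
        (↑(∫ ξ in (0:ℝ)..1, ‖f ξ‖ ^ 2) : ℂ) -
      Complex.I * (κ:ℂ) * (ω:ℂ) * (↑(∫ ξ in (0:ℝ)..1, ‖g ξ‖ ^ 2) : ℂ) =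
    (κ:ℂ) * g' 0 * (starRingEnd ℂ) u₁ - (κ:ℂ) * g 0 * (starRingEnd ℂ) u₂ := by
  have hfc : ContinuousOn f (Icc 0 1) := fun ξ hξ => (hf' ξ hξ).continuousWithinAt
  have hgc : ContinuousOn g (Icc 0 1) := fun ξ hξ => (hg' ξ hξ).continuousWithinAt
  have hwronskian : ∀ ξ ∈ Icc (0:ℝ) 1,
      HasDerivWithinAt (fun ξ => κ / β * (g ξ * conj (f' ξ) - g' ξ * conj (f ξ)))
        (1 / β * (Complex.I * ω + γ / β) * (‖f ξ‖ ^ 2 : ℝ) - Complex.I * κ * ω * (‖g ξ‖ ^ 2 : ℝ))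
        (Icc 0 1) ξ := fun ξ hξ =>
    beam_mul_conj_sub_mul_conj_eq_energy_density hβ.ne' (hode1 ξ hξ) (hode2 ξ hξ) ▸
      ((hf' ξ hξ).mul_conj_sub_mul_conj (hf'' ξ hξ) (hg' ξ hξ) (hg'' ξ hξ)).const_mul _
  rw [← intervalIntegral.integral_mul_sq_norm_sub_mul_sq_norm (by rwa [uIcc_of_le zero_le_one])
    (by rwa [uIcc_of_le zero_le_one]), intervalIntegral.integral_eq_sub_of_hasDerivWithinAt_Icc
    zero_le_one hwronskian (by fun_prop)]
  have hβ0 : (β:ℂ) ≠ 0 := by exact_mod_cast hβ.ne'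
  simp only [hbc1, hbc2, hbc3, hbc4, map_mul, Complex.conj_ofReal]
  field_simp
  ring

/-- Frequency-domain energy identity for the damped Euler–Bernoulli beam: if `f`, `g` are
twice continuously differentiable on `[0,1]` and satisfy
`(iω + γ/β)f + κg'' = 0`, `−(1/β)f'' + iωg = 0` with boundary conditions
`f(0) = βu₁`, `f'(0) = βu₂`, `g(1) = 0`, `g'(1) = 0`, then
`(1/β)(iω + γ/β)∫|f|² − iκω∫|g|² = κg'(0)·conj(u₁) − κg(0)·conj(u₂)`. -/
theorem beam_frequency_energy_identity
    (β κ γ : ℝ) (hβ : 0 < β) (hκ : 0 < κ) (hγ : 0 < γ) (ω : ℝ) (u₁ u₂ : ℂ)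
    (f f' f'' g g' g'' : ℝ → ℂ)
    (hf' : ∀ ξ ∈ Set.Icc (0:ℝ) 1, HasDerivWithinAt f (f' ξ) (Set.Icc (0:ℝ) 1) ξ)
    (hf'' : ∀ ξ ∈ Set.Icc (0:ℝ) 1, HasDerivWithinAt f' (f'' ξ) (Set.Icc (0:ℝ) 1) ξ)
    (hg' : ∀ ξ ∈ Set.Icc (0:ℝ) 1, HasDerivWithinAt g (g' ξ) (Set.Icc (0:ℝ) 1) ξ)
    (hg'' : ∀ ξ ∈ Set.Icc (0:ℝ) 1, HasDerivWithinAt g' (g'' ξ) (Set.Icc (0:ℝ) 1) ξ)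
    (hf''c : ContinuousOn f'' (Set.Icc (0:ℝ) 1))
    (hg''c : ContinuousOn g'' (Set.Icc (0:ℝ) 1))
    (hode1 : ∀ ξ ∈ Set.Icc (0:ℝ) 1,
      (Complex.I * (ω:ℂ) + (γ:ℂ) / (β:ℂ)) * f ξ + (κ:ℂ) * g'' ξ = 0)
    (hode2 : ∀ ξ ∈ Set.Icc (0:ℝ) 1,
      -(1 / (β:ℂ)) * f'' ξ + Complex.I * (ω:ℂ) * g ξ = 0)
    (hbc1 : f 0 = (β:ℂ) * u₁) (hbc2 : f' 0 = (β:ℂ) * u₂)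
    (hbc3 : g 1 = 0) (hbc4 : g' 1 = 0) :
    (1 / (β:ℂ)) * (Complex.I * (ω:ℂ) + (γ:ℂ) / (β:ℂ)) *
        (↑(∫ ξ in (0:ℝ)..1, ‖f ξ‖ ^ 2) : ℂ) -
      Complex.I * (κ:ℂ) * (ω:ℂ) * (↑(∫ ξ in (0:ℝ)..1, ‖g ξ‖ ^ 2) : ℂ) =
    (κ:ℂ) * g' 0 * (starRingEnd ℂ) u₁ - (κ:ℂ) * g 0 * (starRingEnd ℂ) u₂ :=
  beam_frequency_energy_identity_general β κ γ hβ ω u₁ u₂ f f' f'' g g' g'' hf' hf'' hg' hg'' hode1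
    hode2 hbc1 hbc2 hbc3 hbc4
end

section
/- Let β, κ, γ > 0, let u₁, u₂ ∈ ℂ, and let f, g : [0,1] → ℂ be twice continuously differentiable functions satisfying (γ/β)·f(ξ) + κ·g''(ξ) = 0 and f''(ξ) = 0 for all ξ ∈ [0,1], together with f(0) = β·u₁, f'(0) = β·u₂, g(1) = 0, g'(1) = 0. Then κ·g'(0) = γ·(u₁ + u₂/2) and −κ·g(0) = γ·(u₁/2 + u₂/3). In particular the boundary output (κg'(0), −κg(0)) equals γ·M·(u₁,u₂) with the invertible matrix M = [[1, 1/2],[1/2, 1/3]]. -/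
open Set Polynomial

/-!
At `ω = 0` the system decouples into a chain of integrations: `f'' = 0` makes `f` affine,
`(γ/β)f + κg'' = 0` then makes `g''` affine, and integrating twice against the free-end conditions
`g(1) = g'(1) = 0` gives `g'(0)` and `g(0)` as moments of `u₁ + u₂ξ` over `[0,1]`.
-/

theorem eqOn_Icc_of_hasDerivWithinAt_eq {E : Type*} [NormedAddCommGroup E] [NormedSpace ℝ E]
    {F G F' : ℝ → E} {a b : ℝ}
    (hF : ∀ x ∈ Icc a b, HasDerivWithinAt F (F' x) (Icc a b) x)
    (hG : ∀ x ∈ Icc a b, HasDerivWithinAt G (F' x) (Icc a b) x) (ha : F a = G a) :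
    EqOn F G (Icc a b) := by
  have toIci : ∀ {H : ℝ → E}, (∀ x ∈ Icc a b, HasDerivWithinAt H (F' x) (Icc a b) x) →
      ∀ x ∈ Ico a b, HasDerivWithinAt H (F' x) (Ici x) x := fun hH x hx =>
    (hH x (Ico_subset_Icc_self hx)).mono_of_mem_nhdsWithin (Icc_mem_nhdsGE_of_mem hx)
  exact eq_of_has_deriv_right_eq (toIci hF) (toIci hG)
    (fun x hx => (hF x hx).continuousWithinAt) (fun x hx => (hG x hx).continuousWithinAt) ha

theorem eqOn_Icc_polynomial_of_hasDerivWithinAt {F F' : ℝ → ℂ} {a b : ℝ} (p : ℂ[X])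
    (hF : ∀ x ∈ Icc a b, HasDerivWithinAt F (F' x) (Icc a b) x)
    (hF' : ∀ x ∈ Icc a b, F' x = p.derivative.eval (x : ℂ)) (ha : F a = p.eval (a : ℂ)) :
    ∀ x ∈ Icc a b, F x = p.eval (x : ℂ) :=
  eqOn_Icc_of_hasDerivWithinAt_eq hF
    (fun x hx => hF' x hx ▸ ((p.hasDerivAt (x : ℂ)).comp_ofReal).hasDerivWithinAt) ha

theorem eq_add_mul_sub_of_hasDerivWithinAt_of_second_eq_zero {F F' F'' : ℝ → ℂ} {a b : ℝ}
    (hF : ∀ x ∈ Icc a b, HasDerivWithinAt F (F' x) (Icc a b) x)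
    (hF' : ∀ x ∈ Icc a b, HasDerivWithinAt F' (F'' x) (Icc a b) x)
    (hF'' : ∀ x ∈ Icc a b, F'' x = 0) :
    ∀ x ∈ Icc a b, F x = F a + F' a * (x - a) := by
  have hF'_eq := eqOn_Icc_polynomial_of_hasDerivWithinAt (C (F' a)) hF'
    (fun x hx => by simp [hF'' x hx]) (by simp)
  have hF_eq := eqOn_Icc_polynomial_of_hasDerivWithinAt (C (F a) + C (F' a) * (X - C (a : ℂ))) hF
    (fun x hx => by simp [hF'_eq x hx]) (by simp)
  intro x hx
  simpa using hF_eq x hx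

theorem free_end_values_of_second_deriv_eq_affine {g g' g'' : ℝ → ℂ} {c₀ c₁ : ℂ}
    (hg' : ∀ x ∈ Icc (0 : ℝ) 1, HasDerivWithinAt g (g' x) (Icc 0 1) x)
    (hg'' : ∀ x ∈ Icc (0 : ℝ) 1, HasDerivWithinAt g' (g'' x) (Icc 0 1) x)
    (hg''_eq : ∀ x ∈ Icc (0 : ℝ) 1, g'' x = c₀ + c₁ * x) (hg1 : g 1 = 0) (hg'1 : g' 1 = 0) :
    g' 0 = -(c₀ + c₁ / 2) ∧ g 0 = c₀ / 2 + c₁ / 3 := by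
  have hg'_eq := eqOn_Icc_polynomial_of_hasDerivWithinAt
    (C (g' 0) + C c₀ * X + C (c₁ / 2) * X ^ 2) hg''
    (fun x hx => by simp [hg''_eq x hx]; ring) (by simp)
  have hg_eq := eqOn_Icc_polynomial_of_hasDerivWithinAt
    (C (g 0) + C (g' 0) * X + C (c₀ / 2) * X ^ 2 + C (c₁ / 6) * X ^ 3) hg'
    (fun x hx => by simp [hg'_eq x hx]; ring) (by simp)
  have one_mem : (1 : ℝ) ∈ Icc (0 : ℝ) 1 := right_mem_Icc.2 zero_le_one
  have hg'_one := hg'_eq 1 one_mem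
  have hg_one := hg_eq 1 one_mem
  simp only [hg1, hg'1, Complex.ofReal_one, eval_add, eval_mul, eval_C, eval_X, eval_pow,
    one_pow, mul_one] at hg'_one hg_one
  constructor
  · linear_combination -hg'_one
  · linear_combination hg'_one - hg_one

theorem isUnit_hilbert_two : IsUnit !![(1 : ℂ), 1 / 2; 1 / 2, 1 / 3] := by
  rw [Matrix.isUnit_iff_isUnit_det, Matrix.det_fin_two_of]
  norm_num

theorem beam_transfer_function_at_zero_general
    (β κ γ : ℝ) (hβ : 0 < β) (hκ : 0 < κ) (u₁ u₂ : ℂ)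
    (f f' f'' g g' g'' : ℝ → ℂ)
    (hf' : ∀ ξ ∈ Set.Icc (0:ℝ) 1, HasDerivWithinAt f (f' ξ) (Set.Icc (0:ℝ) 1) ξ)
    (hf'' : ∀ ξ ∈ Set.Icc (0:ℝ) 1, HasDerivWithinAt f' (f'' ξ) (Set.Icc (0:ℝ) 1) ξ)
    (hg' : ∀ ξ ∈ Set.Icc (0:ℝ) 1, HasDerivWithinAt g (g' ξ) (Set.Icc (0:ℝ) 1) ξ)
    (hg'' : ∀ ξ ∈ Set.Icc (0:ℝ) 1, HasDerivWithinAt g' (g'' ξ) (Set.Icc (0:ℝ) 1) ξ)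
    (hode1 : ∀ ξ ∈ Set.Icc (0:ℝ) 1, ((γ:ℂ) / (β:ℂ)) * f ξ + (κ:ℂ) * g'' ξ = 0)
    (hode2 : ∀ ξ ∈ Set.Icc (0:ℝ) 1, f'' ξ = 0)
    (hbc1 : f 0 = (β:ℂ) * u₁) (hbc2 : f' 0 = (β:ℂ) * u₂)
    (hbc3 : g 1 = 0) (hbc4 : g' 1 = 0) :
    (κ:ℂ) * g' 0 = (γ:ℂ) * (u₁ + u₂ / 2) ∧
    -(κ:ℂ) * g 0 = (γ:ℂ) * (u₁ / 2 + u₂ / 3) ∧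
    ![(κ:ℂ) * g' 0, -(κ:ℂ) * g 0] =
      (γ:ℂ) • Matrix.mulVec !![(1:ℂ), 1/2; 1/2, 1/3] ![u₁, u₂] ∧
    IsUnit (!![(1:ℂ), 1/2; 1/2, 1/3]) := by
  have hβ0 : (β : ℂ) ≠ 0 := by exact_mod_cast hβ.ne'
  have hκ0 : (κ : ℂ) ≠ 0 := by exact_mod_cast hκ.ne'
  have hf_eq := eq_add_mul_sub_of_hasDerivWithinAt_of_second_eq_zero hf' hf'' hode2
  have hg''_eq : ∀ x ∈ Icc (0 : ℝ) 1, g'' x = -(γ / κ) * u₁ + -(γ / κ) * u₂ * x := by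
    intro x hx
    have h := hode1 x hx
    rw [hf_eq x hx, hbc1, hbc2, Complex.ofReal_zero, sub_zero] at h
    field_simp at h ⊢
    linear_combination h
  obtain ⟨hg'0, hg0⟩ := free_end_values_of_second_deriv_eq_affine hg' hg'' hg''_eq hbc3 hbc4
  have hκg'0 : (κ : ℂ) * g' 0 = γ * (u₁ + u₂ / 2) := by
    rw [hg'0]; field_simp; ring
  have hκg0 : -(κ : ℂ) * g 0 = γ * (u₁ / 2 + u₂ / 3) := by
    rw [hg0]; field_simp; ring
  refine ⟨hκg'0, hκg0, ?_, isUnit_hilbert_two⟩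
  rw [hκg'0, hκg0, Matrix.mulVec_fin_two, Matrix.smul_vec2]
  congr 2 <;> simp only [Matrix.of_apply, Matrix.cons_val', Matrix.cons_val_zero,
    Matrix.cons_val_one, Matrix.cons_val_fin_one, smul_eq_mul] <;> ring

/-- Frequency-domain computation at `ω = 0` for the damped Euler–Bernoulli beam: from
`(γ/β)f + κg'' = 0`, `f'' = 0` with `f(0) = βu₁`, `f'(0) = βu₂`, `g(1) = g'(1) = 0`,
one gets `κg'(0) = γ(u₁ + u₂/2)` and `−κg(0) = γ(u₁/2 + u₂/3)`; in particular the boundary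
output equals `γ·M·(u₁,u₂)` with the invertible matrix `M = [[1,1/2],[1/2,1/3]]`. -/
theorem beam_transfer_function_at_zero
    (β κ γ : ℝ) (hβ : 0 < β) (hκ : 0 < κ) (hγ : 0 < γ) (u₁ u₂ : ℂ)
    (f f' f'' g g' g'' : ℝ → ℂ)
    (hf' : ∀ ξ ∈ Set.Icc (0:ℝ) 1, HasDerivWithinAt f (f' ξ) (Set.Icc (0:ℝ) 1) ξ)
    (hf'' : ∀ ξ ∈ Set.Icc (0:ℝ) 1, HasDerivWithinAt f' (f'' ξ) (Set.Icc (0:ℝ) 1) ξ)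
    (hg' : ∀ ξ ∈ Set.Icc (0:ℝ) 1, HasDerivWithinAt g (g' ξ) (Set.Icc (0:ℝ) 1) ξ)
    (hg'' : ∀ ξ ∈ Set.Icc (0:ℝ) 1, HasDerivWithinAt g' (g'' ξ) (Set.Icc (0:ℝ) 1) ξ)
    (hf''c : ContinuousOn f'' (Set.Icc (0:ℝ) 1))
    (hg''c : ContinuousOn g'' (Set.Icc (0:ℝ) 1))
    (hode1 : ∀ ξ ∈ Set.Icc (0:ℝ) 1, ((γ:ℂ) / (β:ℂ)) * f ξ + (κ:ℂ) * g'' ξ = 0)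
    (hode2 : ∀ ξ ∈ Set.Icc (0:ℝ) 1, f'' ξ = 0)
    (hbc1 : f 0 = (β:ℂ) * u₁) (hbc2 : f' 0 = (β:ℂ) * u₂)
    (hbc3 : g 1 = 0) (hbc4 : g' 1 = 0) :
    (κ:ℂ) * g' 0 = (γ:ℂ) * (u₁ + u₂ / 2) ∧
    -(κ:ℂ) * g 0 = (γ:ℂ) * (u₁ / 2 + u₂ / 3) ∧
    ![(κ:ℂ) * g' 0, -(κ:ℂ) * g 0] =
      (γ:ℂ) • Matrix.mulVec !![(1:ℂ), 1/2; 1/2, 1/3] ![u₁, u₂] ∧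
    IsUnit (!![(1:ℂ), 1/2; 1/2, 1/3]) :=
  beam_transfer_function_at_zero_general β κ γ hβ hκ u₁ u₂ f f' f'' g g' g'' hf' hf'' hg' hg'' hode1
    hode2 hbc1 hbc2 hbc3 hbc4
end

section
/- Let β, κ, γ > 0 and for ω > 0 let α(ω) = (β/κ)^{1/4}·(ω² − i(γ/β)ω)^{1/4} ∈ ℂ, where z^{1/4} = exp((1/4)·Log z) denotes the principal fourth root. Then there exist ω₀ ≥ 1 and constants m₁, m₂, m₃, m₄ > 0 such that for all ω ≥ ω₀: m₁·√ω ≤ Re(α(ω)) ≤ m₂·√ω and m₃/√ω ≤ −Im(α(ω)) ≤ m₄/√ω. -/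
/-- The characteristic wavenumber `α(ω) = (β/κ)^{1/4}·(ω² − i(γ/β)ω)^{1/4}`, where
`z^{1/4} = exp((1/4)·Log z)` is the principal fourth root. -/
noncomputable def alphaWN (β κ γ ω : ℝ) : ℂ :=
  ((β / κ) ^ ((1:ℝ)/4) : ℝ) *
    Complex.exp ((1/4 : ℂ) * Complex.log ((ω:ℂ) ^ 2 - Complex.I * ((γ:ℂ) / (β:ℂ)) * (ω:ℂ)))

/-!
Write `z = ω² − i(γ/β)ω`, so that `α = c · z^{1/4}` with `c = (β/κ)^{1/4}`, whence
`Re α = c ‖z‖^{1/4} cos(arg z / 4)` and `−Im α = c ‖z‖^{1/4} sin(|arg z| / 4)`.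
For `ω ≥ 1` we have `ω² ≤ ‖z‖ ≤ (1 + γ/β) ω²`, so `‖z‖^{1/4} ≍ √ω`, and `sin x ≤ x ≤ tan x`
squeezes `|arg z|` between `|Im z| / ‖z‖` and `|Im z| / Re z`, both `≍ 1/ω`.
As `|arg z| / 4 ≤ π/4`, the cosine stays above `1/2` and, by Jordan's inequality,
the sine is comparable to its argument.
-/

open Real Complex

lemma Real.abs_le_abs_tan {x : ℝ} (hx : |x| < π / 2) : |x| ≤ |tan x| := by
  rcases le_total 0 x with h | h
  · rw [abs_of_nonneg h] at hx ⊢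
    exact (le_tan h hx).trans (le_abs_self _)
  · rw [abs_of_nonpos h] at hx ⊢
    exact (le_tan (neg_nonneg.2 h) hx).trans (by rw [tan_neg]; exact neg_le_abs _)

lemma Real.sq_rpow_one_div_four {x : ℝ} (hx : 0 ≤ x) : (x ^ 2) ^ (1 / 4 : ℝ) = √x := by
  rw [sqrt_eq_rpow, ← rpow_natCast, ← rpow_mul hx]
  norm_num

namespace Complex

lemma abs_im_div_norm_le_abs_arg (z : ℂ) : |z.im| / ‖z‖ ≤ |arg z| := by
  simpa [sin_arg, abs_div] using Real.abs_sin_le_abs (x := arg z)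

lemma abs_arg_le_abs_im_div_re {z : ℂ} (hz : 0 < z.re) : |arg z| ≤ |z.im| / z.re := by
  simpa [tan_arg, abs_div, abs_of_pos hz] using
    Real.abs_le_abs_tan (abs_arg_lt_pi_div_two_iff.2 (Or.inl hz))

lemma half_le_cos_arg_div_four (z : ℂ) : 1 / 2 ≤ Real.cos (arg z / 4) := by
  rw [← Real.cos_abs, abs_div, abs_of_pos (four_pos : (0:ℝ) < 4), ← Real.cos_pi_div_three]
  exact Real.cos_le_cos_of_nonneg_of_le_pi (by positivity) (by linarith [pi_pos])
    (by linarith [abs_arg_le_pi z, pi_pos])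

end Complex

noncomputable def radicand (k ω : ℝ) : ℂ := (ω : ℂ) ^ 2 - I * k * ω

section radicand

variable {k ω : ℝ}

@[simp] lemma radicand_re : (radicand k ω).re = ω ^ 2 := by simp [radicand, sq]

@[simp] lemma radicand_im : (radicand k ω).im = -(k * ω) := by simp [radicand, sq]

lemma radicand_ne_zero (hω : ω ≠ 0) : radicand k ω ≠ 0 := fun h ↦ by
  simpa [hω] using congrArg re h

lemma sq_le_norm_radicand : ω ^ 2 ≤ ‖radicand k ω‖ := radicand_re (k := k) ▸ re_le_norm _

lemma norm_radicand_le (hk : 0 ≤ k) (hω : 1 ≤ ω) : ‖radicand k ω‖ ≤ (1 + k) * ω ^ 2 := by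
  have hω0 : 0 ≤ ω := zero_le_one.trans hω
  calc ‖radicand k ω‖ ≤ |(radicand k ω).re| + |(radicand k ω).im| := norm_le_abs_re_add_abs_im _
    _ = ω ^ 2 + k * ω := by simp [abs_of_nonneg, hk, hω0]
    _ ≤ (1 + k) * ω ^ 2 := by nlinarith [mul_nonneg hk (mul_nonneg (sub_nonneg.2 hω) hω0)]

lemma abs_arg_radicand_le (hk : 0 ≤ k) (hω : 0 < ω) : |arg (radicand k ω)| ≤ k / ω := by
  calc |arg (radicand k ω)| ≤ |(radicand k ω).im| / (radicand k ω).re :=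
        abs_arg_le_abs_im_div_re (by simpa using pow_pos hω 2)
    _ = k / ω := by
      rw [radicand_im, radicand_re, abs_neg, abs_of_nonneg (by positivity)]
      field_simp

lemma le_abs_arg_radicand (hk : 0 ≤ k) (hω : 1 ≤ ω) :
    k / ((1 + k) * ω) ≤ |arg (radicand k ω)| := by
  have hω0 : 0 < ω := zero_lt_one.trans_le hω
  calc k / ((1 + k) * ω) = k * ω / ((1 + k) * ω ^ 2) := by field_simp
    _ ≤ |(radicand k ω).im| / ‖radicand k ω‖ := by
      rw [radicand_im, abs_neg, abs_of_nonneg (by positivity)]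
      exact div_le_div_of_nonneg_left (by positivity) (norm_pos_iff.2 (radicand_ne_zero hω0.ne'))
        (norm_radicand_le hk hω)
    _ ≤ |arg (radicand k ω)| := abs_im_div_norm_le_abs_arg _

lemma arg_radicand_neg (hk : 0 < k) (hω : 0 < ω) : arg (radicand k ω) < 0 :=
  arg_neg_iff.2 (by simpa using mul_pos hk hω)

lemma sqrt_le_norm_radicand_rpow (hω : 0 ≤ ω) : √ω ≤ ‖radicand k ω‖ ^ (1 / 4 : ℝ) :=
  Real.sq_rpow_one_div_four hω ▸ rpow_le_rpow (by positivity) sq_le_norm_radicand (by norm_num)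

lemma norm_radicand_rpow_le (hk : 0 ≤ k) (hω : 1 ≤ ω) :
    ‖radicand k ω‖ ^ (1 / 4 : ℝ) ≤ (1 + k) ^ (1 / 4 : ℝ) * √ω := by
  rw [← Real.sq_rpow_one_div_four (zero_le_one.trans hω),
    ← mul_rpow (by positivity) (by positivity)]
  exact rpow_le_rpow (norm_nonneg _) (norm_radicand_le hk hω) (by norm_num)

end radicand

section alphaWN

variable {β κ γ ω : ℝ}

-- At `ω = 0` the two sides differ: `exp (log 0 / 4) = 1` but `0 ^ (1/4) = 0`.
lemma alphaWN_eq_mul_cpow (hω : ω ≠ 0) :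
    alphaWN β κ γ ω = ((β / κ) ^ (1 / 4 : ℝ) : ℝ) * radicand (γ / β) ω ^ ((1 / 4 : ℝ) : ℂ) := by
  rw [alphaWN, cpow_def_of_ne_zero (radicand_ne_zero hω), radicand]
  push_cast
  ring_nf

lemma re_alphaWN (hω : ω ≠ 0) :
    (alphaWN β κ γ ω).re = (β / κ) ^ (1 / 4 : ℝ) *
      (‖radicand (γ / β) ω‖ ^ (1 / 4 : ℝ) * Real.cos (arg (radicand (γ / β) ω) / 4)) := by
  rw [alphaWN_eq_mul_cpow hω, re_ofReal_mul, cpow_ofReal_re, mul_one_div]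

lemma neg_im_alphaWN (hk : 0 < γ / β) (hω : 0 < ω) :
    -(alphaWN β κ γ ω).im = (β / κ) ^ (1 / 4 : ℝ) *
      (‖radicand (γ / β) ω‖ ^ (1 / 4 : ℝ) * Real.sin (|arg (radicand (γ / β) ω)| / 4)) := by
  rw [alphaWN_eq_mul_cpow hω.ne', im_ofReal_mul, cpow_ofReal_im, mul_one_div,
    abs_of_neg (arg_radicand_neg hk hω), neg_div, Real.sin_neg]
  ring

lemma re_alphaWN_bounds (hβκ : 0 ≤ β / κ) (hk : 0 ≤ γ / β) (hω : 1 ≤ ω) :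
    (β / κ) ^ (1 / 4 : ℝ) / 2 * √ω ≤ (alphaWN β κ γ ω).re ∧
      (alphaWN β κ γ ω).re ≤ (β / κ) ^ (1 / 4 : ℝ) * (1 + γ / β) ^ (1 / 4 : ℝ) * √ω := by
  have hc : 0 ≤ (β / κ) ^ (1 / 4 : ℝ) := rpow_nonneg hβκ _
  have hcos := half_le_cos_arg_div_four (radicand (γ / β) ω)
  rw [re_alphaWN (by positivity)]
  constructor
  · calc (β / κ) ^ (1 / 4 : ℝ) / 2 * √ω = (β / κ) ^ (1 / 4 : ℝ) * (√ω * (1 / 2)) := by ring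
      _ ≤ _ := mul_le_mul_of_nonneg_left (mul_le_mul (sqrt_le_norm_radicand_rpow (by positivity))
        hcos (by norm_num) (by positivity)) hc
  · calc _ ≤ (β / κ) ^ (1 / 4 : ℝ) * ((1 + γ / β) ^ (1 / 4 : ℝ) * √ω * 1) :=
          mul_le_mul_of_nonneg_left (mul_le_mul (norm_radicand_rpow_le hk hω) (Real.cos_le_one _)
            (by linarith) (by positivity)) hc
      _ = _ := by ring

lemma neg_im_alphaWN_bounds (hβκ : 0 ≤ β / κ) (hk : 0 < γ / β) (hω : 1 ≤ ω) :
    (β / κ) ^ (1 / 4 : ℝ) * (γ / β) / (2 * π * (1 + γ / β)) / √ω ≤ -(alphaWN β κ γ ω).im ∧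
      -(alphaWN β κ γ ω).im ≤
        (β / κ) ^ (1 / 4 : ℝ) * (1 + γ / β) ^ (1 / 4 : ℝ) * (γ / β) / 4 / √ω := by
  have hω0 : 0 < ω := zero_lt_one.trans_le hω
  have hc : 0 ≤ (β / κ) ^ (1 / 4 : ℝ) := rpow_nonneg hβκ _
  have hφ₀ : 0 ≤ |arg (radicand (γ / β) ω)| / 4 := by positivity
  have hφ₁ : |arg (radicand (γ / β) ω)| / 4 ≤ π / 2 := by
    linarith [abs_arg_le_pi (radicand (γ / β) ω), pi_pos]
  rw [neg_im_alphaWN hk hω0]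
  constructor
  · calc (β / κ) ^ (1 / 4 : ℝ) * (γ / β) / (2 * π * (1 + γ / β)) / √ω
          = (β / κ) ^ (1 / 4 : ℝ) * (√ω * (2 / π * ((γ / β) / ((1 + γ / β) * ω) / 4))) := by
          rw [div_eq_mul_one_div _ √ω, ← sqrt_div_self']
          field_simp
          ring
      _ ≤ (β / κ) ^ (1 / 4 : ℝ) * (‖radicand (γ / β) ω‖ ^ (1 / 4 : ℝ) *
            (2 / π * (|arg (radicand (γ / β) ω)| / 4))) := by
          gcongr
          · exact sqrt_le_norm_radicand_rpow hω0.le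
          · exact le_abs_arg_radicand hk.le hω
      _ ≤ _ := by gcongr; exact mul_le_sin hφ₀ hφ₁
  · calc _ ≤ (β / κ) ^ (1 / 4 : ℝ) * ((1 + γ / β) ^ (1 / 4 : ℝ) * √ω * ((γ / β) / ω / 4)) := by
          gcongr
          · exact sin_nonneg_of_nonneg_of_le_pi hφ₀ (by linarith [pi_pos])
          · exact norm_radicand_rpow_le hk.le hω
          · exact (sin_le hφ₀).trans (by gcongr; exact abs_arg_radicand_le hk.le hω0)
      _ = _ := by
          rw [div_eq_mul_one_div _ √ω, ← sqrt_div_self']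
          field_simp

end alphaWN

/-- Asymptotics of the wavenumber: `Re α(ω) ≍ √ω` and `−Im α(ω) ≍ 1/√ω` for large `ω`. -/
theorem alphaWN_re_im_asymptotics (β κ γ : ℝ) (hβ : 0 < β) (hκ : 0 < κ) (hγ : 0 < γ) :
    ∃ ω₀ ≥ (1:ℝ), ∃ m₁ > (0:ℝ), ∃ m₂ > (0:ℝ), ∃ m₃ > (0:ℝ), ∃ m₄ > (0:ℝ),
      ∀ ω : ℝ, ω₀ ≤ ω →
        m₁ * Real.sqrt ω ≤ (alphaWN β κ γ ω).re ∧
        (alphaWN β κ γ ω).re ≤ m₂ * Real.sqrt ω ∧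
        m₃ / Real.sqrt ω ≤ -(alphaWN β κ γ ω).im ∧
        -(alphaWN β κ γ ω).im ≤ m₄ / Real.sqrt ω := by
  have hβκ : 0 < β / κ := div_pos hβ hκ
  have hk : 0 < γ / β := div_pos hγ hβ
  have hc : 0 < (β / κ) ^ (1 / 4 : ℝ) := rpow_pos_of_pos hβκ _
  refine ⟨1, le_rfl, _, ?_, _, ?_, _, ?_, _, ?_, fun ω hω ↦
    ⟨(re_alphaWN_bounds hβκ.le hk.le hω).1, (re_alphaWN_bounds hβκ.le hk.le hω).2,
      (neg_im_alphaWN_bounds hβκ.le hk hω).1, (neg_im_alphaWN_bounds hβκ.le hk hω).2⟩⟩ <;>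
    positivity
end

section
/- Let β, κ, γ > 0 and for ω > 0 let α(ω) = (β/κ)^{1/4}·(ω² − i(γ/β)ω)^{1/4} ∈ ℂ, where z^{1/4} = exp((1/4)·Log z) denotes the principal fourth root. Then |cosh(α(ω))·cos(α(ω))| → ∞ as ω → ∞; that is, for every R > 0 there exists ω₀ > 0 such that |cosh(α(ω))·cos(α(ω))| ≥ R for all ω ≥ ω₀. -/
lemma Real.cube_div_twelve_le_sinh {x : ℝ} (hx : 0 ≤ x) : x ^ 3 / 12 ≤ Real.sinh x := by
  have hexp : 1 + x + x ^ 2 / 2 + x ^ 3 / 6 ≤ Real.exp x := by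
    have := Real.sum_le_exp_of_nonneg hx 4
    norm_num [Finset.sum_range_succ, Nat.factorial] at this
    linarith
  have hneg : Real.exp (-x) ≤ 1 := Real.exp_le_one_iff.2 (neg_nonpos.2 hx)
  rw [Real.sinh_eq]
  nlinarith [sq_nonneg x]

namespace Complex

lemma normSq_cos (z : ℂ) : normSq (cos z) = Real.cos z.re ^ 2 + Real.sinh z.im ^ 2 := by
  conv_lhs => rw [← re_add_im z, cos_add_mul_I, ← ofReal_cos, ← ofReal_cosh, ← ofReal_sin,
    ← ofReal_sinh, ← ofReal_mul, ← ofReal_mul, sub_eq_add_neg, ← neg_mul, ← ofReal_neg,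
    normSq_add_mul_I]
  linear_combination Real.cos z.re ^ 2 * Real.cosh_sq z.im +
    Real.sinh z.im ^ 2 * Real.sin_sq_add_cos_sq z.re

lemma normSq_cosh (z : ℂ) : normSq (cosh z) = Real.cos z.im ^ 2 + Real.sinh z.re ^ 2 := by
  simpa [cos_mul_I] using normSq_cos (z * I)

lemma abs_sinh_im_le_norm_cos (z : ℂ) : |Real.sinh z.im| ≤ ‖cos z‖ := by
  rw [← abs_norm, ← sq_le_sq, Complex.sq_norm, normSq_cos]
  exact le_add_of_nonneg_left (sq_nonneg _)

lemma abs_sinh_re_le_norm_cosh (z : ℂ) : |Real.sinh z.re| ≤ ‖cosh z‖ := by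
  rw [← abs_norm, ← sq_le_sq, Complex.sq_norm, normSq_cosh]
  exact le_add_of_nonneg_left (sq_nonneg _)

lemma im_pow_four (a : ℂ) : (a ^ 4).im = 4 * a.re * a.im * (a.re ^ 2 - a.im ^ 2) := by
  simp only [pow_succ, pow_zero, one_mul, mul_im, mul_re]
  ring

lemma abs_im_pow_four_le {a : ℂ} (h : ‖a‖ ≤ 2 * a.re) :
    |(a ^ 4).im| ≤ 16 * a.re ^ 3 * |a.im| := by
  have hre : 0 ≤ a.re := by linarith [norm_nonneg a]
  have hsq : a.re ^ 2 + a.im ^ 2 ≤ 4 * a.re ^ 2 := by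
    rw [← sq_norm_sub_sq_re a]
    nlinarith [norm_nonneg a]
  have hdiff : |a.re ^ 2 - a.im ^ 2| ≤ 4 * a.re ^ 2 := by
    rw [abs_le]
    constructor <;> nlinarith [sq_nonneg a.im, sq_nonneg a.re]
  rw [im_pow_four, abs_mul, abs_mul, abs_mul, abs_of_nonneg hre, abs_of_pos four_pos]
  calc 4 * a.re * |a.im| * |a.re ^ 2 - a.im ^ 2|
      ≤ 4 * a.re * |a.im| * (4 * a.re ^ 2) := by gcongr
    _ = 16 * a.re ^ 3 * |a.im| := by ring

lemma abs_im_pow_four_div_le_norm_cosh_mul_cos {a : ℂ} (h : ‖a‖ ≤ 2 * a.re) :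
    |(a ^ 4).im| / 192 ≤ ‖cosh a * cos a‖ := by
  have hre : 0 ≤ a.re := by linarith [norm_nonneg a]
  have hcosh : a.re ^ 3 / 12 ≤ ‖cosh a‖ :=
    calc a.re ^ 3 / 12 ≤ Real.sinh a.re := Real.cube_div_twelve_le_sinh hre
      _ ≤ |Real.sinh a.re| := le_abs_self _
      _ ≤ ‖cosh a‖ := abs_sinh_re_le_norm_cosh a
  have hcos : |a.im| ≤ ‖cos a‖ :=
    calc |a.im| ≤ |Real.sinh a.im| := by
          rw [Real.abs_sinh]
          exact Real.self_le_sinh_iff.2 (abs_nonneg _)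
      _ ≤ ‖cos a‖ := abs_sinh_im_le_norm_cos a
  calc |(a ^ 4).im| / 192 ≤ 16 * a.re ^ 3 * |a.im| / 192 := by
        gcongr
        exact abs_im_pow_four_le h
    _ = a.re ^ 3 / 12 * |a.im| := by ring
    _ ≤ ‖cosh a‖ * ‖cos a‖ := by gcongr
    _ = ‖cosh a * cos a‖ := (norm_mul _ _).symm

lemma norm_exp_le_two_mul_re_exp {w : ℂ} (hw : |w.im| ≤ Real.pi / 3) :
    ‖exp w‖ ≤ 2 * (exp w).re := by
  have hcos : 1 / 2 ≤ Real.cos w.im := by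
    rw [← Real.cos_abs, ← Real.cos_pi_div_three]
    exact Real.cos_le_cos_of_nonneg_of_le_pi (abs_nonneg _) (by linarith [Real.pi_pos]) hw
  rw [norm_exp, exp_re]
  nlinarith [Real.exp_pos w.re]

lemma norm_le_two_mul_re_exp_quarter_log (z : ℂ) :
    ‖exp (1 / 4 * log z)‖ ≤ 2 * (exp (1 / 4 * log z)).re := by
  refine norm_exp_le_two_mul_re_exp ?_
  have him : (1 / 4 * log z).im = arg z / 4 := by
    simp [log_im]
    ring
  rw [him, abs_div, abs_of_pos (four_pos : (0:ℝ) < 4)]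
  linarith [abs_arg_le_pi z, Real.pi_pos]

lemma exp_quarter_log_pow_four {z : ℂ} (hz : z ≠ 0) : exp (1 / 4 * log z) ^ 4 = z := by
  rw [← exp_nat_mul, ← mul_assoc]
  norm_num [exp_log hz]

end Complex

lemma norm_alphaWN_le_two_mul_re {β κ : ℝ} (hβκ : 0 ≤ β / κ) (γ ω : ℝ) :
    ‖alphaWN β κ γ ω‖ ≤ 2 * (alphaWN β κ γ ω).re := by
  have hc : 0 ≤ (β / κ) ^ ((1:ℝ)/4) := Real.rpow_nonneg hβκ _
  rw [alphaWN, norm_mul, Complex.norm_of_nonneg hc, Complex.re_ofReal_mul, mul_left_comm]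
  exact mul_le_mul_of_nonneg_left (Complex.norm_le_two_mul_re_exp_quarter_log _) hc

lemma im_alphaWN_pow_four {β κ : ℝ} (hβ : β ≠ 0) (hβκ : 0 ≤ β / κ) (γ : ℝ) {ω : ℝ}
    (hω : ω ≠ 0) : (alphaWN β κ γ ω ^ 4).im = -(γ / κ * ω) := by
  have hz : (ω:ℂ) ^ 2 - Complex.I * ((γ:ℂ) / (β:ℂ)) * (ω:ℂ) ≠ 0 := by
    intro h
    have hre := congrArg Complex.re h
    simp [← Complex.ofReal_pow] at hre
    exact hω hre
  have hc : (((β / κ) ^ ((1:ℝ)/4) : ℝ) : ℂ) ^ 4 = ((β / κ : ℝ) : ℂ) := by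
    rw [← Complex.ofReal_pow, one_div]
    exact_mod_cast congrArg Complex.ofReal (Real.rpow_inv_natCast_pow hβκ four_ne_zero)
  rw [alphaWN, mul_pow, hc, Complex.exp_quarter_log_pow_four hz]
  simp [← Complex.ofReal_pow]
  field_simp

lemma div_le_norm_cosh_mul_cos_alphaWN {β κ γ ω : ℝ} (hβ : 0 < β) (hκ : 0 < κ) (hγ : 0 ≤ γ)
    (hω : 0 < ω) :
    γ / κ * ω / 192 ≤ ‖Complex.cosh (alphaWN β κ γ ω) * Complex.cos (alphaWN β κ γ ω)‖ := by
  have hβκ : 0 ≤ β / κ := (div_pos hβ hκ).le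
  have hbound := Complex.abs_im_pow_four_div_le_norm_cosh_mul_cos
    (norm_alphaWN_le_two_mul_re hβκ γ ω)
  rwa [im_alphaWN_pow_four hβ.ne' hβκ γ hω.ne', abs_neg, abs_of_nonneg (by positivity)]
    at hbound

/-- `|cosh(α(ω))·cos(α(ω))| → ∞` as `ω → ∞`. -/
theorem abs_cosh_mul_cos_alphaWN_tendsto_atTop
    (β κ γ : ℝ) (hβ : 0 < β) (hκ : 0 < κ) (hγ : 0 < γ) :
    ∀ R > (0:ℝ), ∃ ω₀ > (0:ℝ), ∀ ω : ℝ, ω₀ ≤ ω →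
      R ≤ ‖Complex.cosh (alphaWN β κ γ ω) * Complex.cos (alphaWN β κ γ ω)‖ := by
  intro R hR
  refine ⟨192 * R / (γ / κ), by positivity, fun ω hω => ?_⟩
  have hγκ : 0 < γ / κ := div_pos hγ hκ
  have hω0 : 0 < ω := lt_of_lt_of_le (by positivity) hω
  refine le_trans ?_ (div_le_norm_cosh_mul_cos_alphaWN hβ hκ hγ.le hω0)
  rw [div_le_iff₀ hγκ] at hω
  linarith
end

section
/- Let β, κ, γ > 0 and for ω > 0 let α(ω) = (β/κ)^{1/4}·(ω² − i(γ/β)ω)^{1/4} ∈ ℂ, where z^{1/4} = exp((1/4)·Log z) denotes the principal fourth root. Then there exist ω₀ > 0 and M > 0 such that for all ω ≥ ω₀: 1 + cosh(α(ω))·cos(α(ω)) ≠ 0 and |sinh(α(ω))·sin(α(ω)) / (1 + cosh(α(ω))·cos(α(ω)))| ≤ M·√ω. -/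
/-!
Write `z = x + iy`. From `cosh z = (eᶻ + e⁻ᶻ)/2` and its relatives one gets `sinh |x| ≤ ‖cosh z‖`,
`sinh |y| ≤ ‖cos z‖`, `‖sinh z‖ ≤ cosh x` and `‖sin z‖ ≤ cosh y`, hence
`‖sinh z sin z / (1 + cosh z cos z)‖ ≤ cosh x cosh y / (sinh |x| sinh |y| - 1)`,
which is `O(1/|y|)` as soon as `x ≥ 1`, `|y| ≤ 1` and `sinh x · |y| ≥ 2`.

For `ω > 0` the wavenumber factors as `α(ω) = c √ω (1 - iδ/ω)^{1/4}` with `c = (β/κ)^{1/4}` and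
`δ = γ/β`, and `(1 - it)^{1/4} = 1 - it/4 + o(t)` by differentiability at `t = 0`. So `Re α ≥ c√ω/2`
while `|Im α|` is of exact order `cδ/√ω`; the exponential growth of `sinh (Re α)` beats the decay of
`|Im α|`, and the ratio is `O(1/|Im α|) = O(√ω)`.
-/

open Complex Filter Topology

lemma Real.sq_div_four_le_sinh {x : ℝ} (hx : 0 ≤ x) : x ^ 2 / 4 ≤ Real.sinh x := by
  rw [Real.sinh_eq]
  nlinarith [Real.quadratic_le_exp_of_nonneg hx, Real.exp_le_one_iff.2 (neg_nonpos.2 hx)]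

namespace Complex

lemma sinh_abs_re_le_norm_cosh (z : ℂ) : Real.sinh |z.re| ≤ ‖cosh z‖ := by
  have h := abs_norm_sub_norm_le (exp z) (-exp (-z))
  rw [norm_neg, norm_exp, norm_exp, neg_re, sub_neg_eq_add] at h
  rw [← Real.abs_sinh, Real.sinh_eq, cosh, norm_div, abs_div, Complex.norm_two, abs_two]
  gcongr

lemma norm_sinh_le_cosh_re (z : ℂ) : ‖sinh z‖ ≤ Real.cosh z.re := by
  have h : Real.cosh z.re = (‖exp z‖ + ‖exp (-z)‖) / 2 := by simp [Real.cosh_eq, norm_exp]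
  rw [h, sinh, norm_div, Complex.norm_two]
  gcongr
  exact norm_sub_le _ _

lemma sinh_abs_im_le_norm_cos (z : ℂ) : Real.sinh |z.im| ≤ ‖cos z‖ := by
  simpa [← cosh_mul_I] using sinh_abs_re_le_norm_cosh (z * I)

lemma norm_sin_le_cosh_im (z : ℂ) : ‖sin z‖ ≤ Real.cosh z.im := by
  simpa [sinh_mul_I] using norm_sinh_le_cosh_re (z * I)

lemma sub_one_le_norm_one_add_cosh_mul_cos (z : ℂ) :
    Real.sinh |z.re| * Real.sinh |z.im| - 1 ≤ ‖1 + cosh z * cos z‖ := by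
  have h := abs_norm_sub_norm_le (cosh z * cos z) (-1)
  rw [norm_neg, norm_one, sub_neg_eq_add, add_comm, norm_mul] at h
  have := mul_le_mul (sinh_abs_re_le_norm_cosh z) (sinh_abs_im_le_norm_cos z)
    (Real.sinh_nonneg_iff.2 (abs_nonneg _)) (norm_nonneg _)
  linarith [le_abs_self (‖cosh z‖ * ‖cos z‖ - 1)]

lemma norm_sinh_mul_sin_le (z : ℂ) : ‖sinh z * sin z‖ ≤ Real.cosh z.re * Real.cosh z.im := by
  rw [norm_mul]
  exact mul_le_mul (norm_sinh_le_cosh_re z) (norm_sin_le_cosh_im z) (norm_nonneg _)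
    (Real.cosh_pos _).le

lemma one_add_cosh_mul_cos_ne_zero_and_norm_div_le {z : ℂ} (hre : 1 ≤ z.re) (him : |z.im| ≤ 1)
    (h : 2 ≤ Real.sinh z.re * |z.im|) :
    1 + cosh z * cos z ≠ 0 ∧ ‖sinh z * sin z / (1 + cosh z * cos z)‖ ≤ 12 / |z.im| := by
  have hy : 0 < |z.im| := by
    by_contra! hy; nlinarith [abs_nonneg z.im, Real.sinh_pos_iff.2 (by linarith : 0 < z.re)]
  have hsinh_y : |z.im| ≤ Real.sinh |z.im| := Real.self_le_sinh_iff.2 (abs_nonneg _)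
  have hcosh_x : Real.cosh z.re ≤ 2 * Real.sinh z.re := by
    have := Real.cosh_sub_sinh z.re
    have : Real.exp (-z.re) ≤ 1 := Real.exp_le_one_iff.2 (by linarith)
    linarith [Real.self_le_sinh_iff.2 (show 0 ≤ z.re by linarith)]
  have hcosh_y : Real.cosh z.im ≤ 3 := calc
    Real.cosh z.im ≤ Real.exp (z.im ^ 2 / 2) := Real.cosh_le_exp_half_sq _
    _ ≤ Real.exp 1 := Real.exp_le_exp.2 (by nlinarith [sq_abs z.im, abs_nonneg z.im])
    _ ≤ 3 := by linarith [Real.exp_one_lt_d9]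
  have hden : Real.sinh z.re * Real.sinh |z.im| / 2 ≤ ‖1 + cosh z * cos z‖ := by
    have := sub_one_le_norm_one_add_cosh_mul_cos z
    rw [abs_of_pos (by linarith : 0 < z.re)] at this
    nlinarith [Real.sinh_pos_iff.2 (by linarith : 0 < z.re)]
  have hden_pos : 0 < Real.sinh z.re * Real.sinh |z.im| / 2 := by
    have := Real.sinh_pos_iff.2 (by linarith : 0 < z.re)
    positivity
  refine ⟨norm_pos_iff.1 (hden_pos.trans_le hden), ?_⟩
  calc ‖sinh z * sin z / (1 + cosh z * cos z)‖
      ≤ 2 * Real.sinh z.re * 3 / (Real.sinh z.re * Real.sinh |z.im| / 2) := by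
        rw [norm_div]
        refine div_le_div₀ (by positivity) ((norm_sinh_mul_sin_le z).trans ?_) hden_pos hden
        exact mul_le_mul hcosh_x hcosh_y (Real.cosh_pos _).le (by positivity)
    _ = 12 / Real.sinh |z.im| := by
        have := Real.sinh_pos_iff.2 (by linarith : 0 < z.re)
        field_simp; ring
    _ ≤ 12 / |z.im| := by gcongr

lemma one_add_cosh_mul_cos_ne_zero_and_norm_div_le_of_re_im {z : ℂ} {a b s : ℝ} (hb : 0 < b)
    (has : 1 ≤ a * s) (hbs : 3 * b ≤ s) (habs : 8 ≤ a ^ 2 * b * s)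
    (hre : a * s ≤ z.re) (him : b / s ≤ |z.im|) (him' : |z.im| ≤ 3 * (b / s)) :
    1 + cosh z * cos z ≠ 0 ∧ ‖sinh z * sin z / (1 + cosh z * cos z)‖ ≤ 12 / b * s := by
  have hs : 0 < s := by linarith
  have hsinh : 2 ≤ Real.sinh z.re * |z.im| := calc
    2 ≤ (a * s) ^ 2 / 4 * (b / s) := by
      rw [show (a * s) ^ 2 / 4 * (b / s) = a ^ 2 * b * s / 4 by field_simp]; linarith
    _ ≤ Real.sinh z.re * |z.im| := by
      have h : (a * s) ^ 2 / 4 ≤ Real.sinh z.re :=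
        (Real.sq_div_four_le_sinh (by linarith)).trans (Real.sinh_le_sinh.2 hre)
      gcongr
      exact (by positivity : (0:ℝ) ≤ (a * s) ^ 2 / 4).trans h
  obtain ⟨hne, hle⟩ := one_add_cosh_mul_cos_ne_zero_and_norm_div_le (has.trans hre)
    (him'.trans (by rw [← mul_div_assoc, div_le_one hs]; exact hbs)) hsinh
  refine ⟨hne, hle.trans ?_⟩
  calc 12 / |z.im| ≤ 12 / (b / s) := by gcongr
    _ = 12 / b * s := by field_simp

end Complex

noncomputable def fourthRootOneSubI (t : ℝ) : ℂ := exp ((1/4 : ℂ) * log (1 - I * t))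

lemma one_sub_I_mul_ofReal_ne_zero (t : ℝ) : 1 - I * t ≠ 0 := by
  intro h
  simpa using congrArg re h

@[simp] lemma fourthRootOneSubI_zero : fourthRootOneSubI 0 = 1 := by
  simp [fourthRootOneSubI]

lemma hasDerivAt_fourthRootOneSubI : HasDerivAt fourthRootOneSubI (-I / 4) 0 := by
  have hlin : HasDerivAt (fun w : ℂ => 1 - I * w) (-I) 0 := by
    simpa using ((hasDerivAt_id (0:ℂ)).const_mul I).const_sub 1
  have h := ((hlin.clog (by simp)).const_mul (1/4 : ℂ)).cexp
  convert h.comp_ofReal using 1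
  · ext t; simp [fourthRootOneSubI]
  · simp only [mul_zero, sub_zero, log_one, exp_zero, div_one, one_mul]; ring

lemma eventually_norm_fourthRootOneSubI_sub_le :
    ∀ᶠ t in 𝓝 (0:ℝ), ‖fourthRootOneSubI t - (1 - I * t / 4)‖ ≤ |t| / 8 := by
  have h := (hasDerivAt_iff_isLittleO.1 hasDerivAt_fourthRootOneSubI).def
    (by norm_num : (0:ℝ) < 1 / 8)
  filter_upwards [h] with t ht
  rw [fourthRootOneSubI_zero, sub_zero, Real.norm_eq_abs, real_smul] at ht
  rw [show fourthRootOneSubI t - (1 - I * t / 4) = fourthRootOneSubI t - 1 - t * (-I / 4) by ring]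
  linarith

lemma exp_quarter_mul_log_sq_sub_eq_sqrt_mul_fourthRootOneSubI {ω : ℝ} (hω : 0 < ω) (δ : ℝ) :
    exp ((1/4 : ℂ) * log ((ω:ℂ) ^ 2 - I * δ * ω)) = √ω * fourthRootOneSubI (δ / ω) := by
  have hsplit : (ω:ℂ) ^ 2 - I * δ * ω = ((ω ^ 2 : ℝ) : ℂ) * (1 - I * ((δ / ω : ℝ) : ℂ)) := by
    have : (ω:ℂ) ≠ 0 := by exact_mod_cast hω.ne'
    push_cast; field_simp
  have hsqrt : Real.exp (Real.log (ω ^ 2) / 4) = √ω := by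
    rw [Real.sqrt_eq_rpow, Real.rpow_def_of_pos hω, Real.log_pow]; ring_nf
  rw [hsplit, log_ofReal_mul (by positivity) (one_sub_I_mul_ofReal_ne_zero _), mul_add, exp_add,
    fourthRootOneSubI, ← hsqrt, ofReal_exp]
  push_cast; ring_nf

lemma alphaWN_eq_ofReal_mul_fourthRootOneSubI (β κ γ : ℝ) {ω : ℝ} (hω : 0 < ω) :
    alphaWN β κ γ ω = ((β / κ) ^ ((1:ℝ)/4) * √ω : ℝ) * fourthRootOneSubI (γ / β / ω) := by
  rw [alphaWN, ← ofReal_div, exp_quarter_mul_log_sq_sub_eq_sqrt_mul_fourthRootOneSubI hω]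
  push_cast; ring

lemma re_im_bounds_ofReal_mul_fourthRootOneSubI {r t : ℝ} (hr : 0 ≤ r) (ht : 0 ≤ t) (ht4 : t ≤ 4)
    (h : ‖fourthRootOneSubI t - (1 - I * t / 4)‖ ≤ |t| / 8) :
    r / 2 ≤ (r * fourthRootOneSubI t).re ∧ r * t / 8 ≤ |(r * fourthRootOneSubI t).im| ∧
      |(r * fourthRootOneSubI t).im| ≤ 3 * (r * t) / 8 := by
  set u := fourthRootOneSubI t
  rw [abs_of_nonneg ht] at h
  have hre : |u.re - 1| ≤ t / 8 := by
    simpa using (abs_re_le_norm _).trans h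
  have him : |u.im + t / 4| ≤ t / 8 := by
    simpa [sub_eq_add_neg] using (abs_im_le_norm _).trans h
  rw [re_ofReal_mul, im_ofReal_mul, abs_mul, abs_of_nonneg hr]
  have hre' : 1 / 2 ≤ u.re := by linarith [neg_abs_le (u.re - 1)]
  have him' : t / 8 ≤ |u.im| ∧ |u.im| ≤ 3 * t / 8 := by
    rw [abs_le] at him
    rw [abs_of_nonpos (by linarith)]
    constructor <;> linarith
  refine ⟨by nlinarith, by nlinarith, by nlinarith⟩

lemma eventually_re_im_alphaWN {β κ γ : ℝ} (hβ : 0 < β) (hκ : 0 < κ) (hγ : 0 < γ) :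
    ∀ᶠ ω in atTop,
      (β / κ) ^ ((1:ℝ)/4) / 2 * √ω ≤ (alphaWN β κ γ ω).re ∧
      (β / κ) ^ ((1:ℝ)/4) * (γ / β) / 8 / √ω ≤ |(alphaWN β κ γ ω).im| ∧
      |(alphaWN β κ γ ω).im| ≤ 3 * ((β / κ) ^ ((1:ℝ)/4) * (γ / β) / 8 / √ω) := by
  set c := (β / κ) ^ ((1:ℝ)/4) with hc_def
  set δ := γ / β with hδ_def
  have hc : 0 < c := Real.rpow_pos_of_pos (div_pos hβ hκ) _
  have hδ : 0 < δ := div_pos hγ hβ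
  have hroot : ∀ᶠ ω in atTop,
      ‖fourthRootOneSubI (δ / ω) - (1 - I * ↑(δ / ω) / 4)‖ ≤ |δ / ω| / 8 :=
    (tendsto_const_nhds.div_atTop tendsto_id).eventually eventually_norm_fourthRootOneSubI_sub_le
  filter_upwards [hroot, eventually_gt_atTop 0, eventually_ge_atTop (δ / 4)] with ω hu hω hωδ
  obtain ⟨hre, him, him'⟩ := re_im_bounds_ofReal_mul_fourthRootOneSubI (r := c * √ω) (by positivity)
    (by positivity) ((div_le_iff₀ hω).2 (by linarith)) hu
  have hrt : c * √ω * (δ / ω) = 8 * (c * δ / 8 / √ω) := by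
    rw [show δ / ω = δ / √ω ^ 2 by rw [Real.sq_sqrt hω.le]]
    field_simp
  rw [hrt] at him him'
  rw [alphaWN_eq_ofReal_mul_fourthRootOneSubI β κ γ hω, ← hc_def, ← hδ_def]
  refine ⟨by linarith, by linarith, by linarith⟩

/-- For large `ω`, `1 + cosh(α(ω))cos(α(ω)) ≠ 0` and
`|sinh(α(ω))sin(α(ω))/(1 + cosh(α(ω))cos(α(ω)))| ≤ M√ω`. -/
theorem sinh_sin_div_one_add_cosh_cos_bound
    (β κ γ : ℝ) (hβ : 0 < β) (hκ : 0 < κ) (hγ : 0 < γ) :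
    ∃ ω₀ > (0:ℝ), ∃ M > (0:ℝ), ∀ ω : ℝ, ω₀ ≤ ω →
      1 + Complex.cosh (alphaWN β κ γ ω) * Complex.cos (alphaWN β κ γ ω) ≠ 0 ∧
      ‖Complex.sinh (alphaWN β κ γ ω) * Complex.sin (alphaWN β κ γ ω) /
          (1 + Complex.cosh (alphaWN β κ γ ω) * Complex.cos (alphaWN β κ γ ω))‖ ≤
        M * Real.sqrt ω := by
  set a := (β / κ) ^ ((1:ℝ)/4) / 2
  set b := (β / κ) ^ ((1:ℝ)/4) * (γ / β) / 8
  have ha : 0 < a := by positivity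
  have hb : 0 < b := by positivity
  have hbound : ∀ᶠ ω in atTop, 1 + cosh (alphaWN β κ γ ω) * cos (alphaWN β κ γ ω) ≠ 0 ∧
      ‖sinh (alphaWN β κ γ ω) * sin (alphaWN β κ γ ω) /
          (1 + cosh (alphaWN β κ γ ω) * cos (alphaWN β κ γ ω))‖ ≤ 12 / b * √ω := by
    filter_upwards [eventually_re_im_alphaWN hβ hκ hγ,
      (Real.tendsto_sqrt_atTop.const_mul_atTop ha).eventually_ge_atTop 1,
      Real.tendsto_sqrt_atTop.eventually_ge_atTop (3 * b),
      (Real.tendsto_sqrt_atTop.const_mul_atTop (by positivity : 0 < a ^ 2 * b)).eventually_ge_atTop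
        8]
      with ω ⟨hre, him, him'⟩ has hbs habs
    exact one_add_cosh_mul_cos_ne_zero_and_norm_div_le_of_re_im hb has hbs habs hre him him'
  obtain ⟨ω₀, h⟩ := eventually_atTop.1 hbound
  exact ⟨max ω₀ 1, by positivity, _, by positivity, fun ω hω => h ω (le_of_max_le_left hω)⟩
end

section
/- Let n ≥ 1 and let P, Q be n×n complex matrices such that Re⟨Pv, v⟩ > 0 for every nonzero v ∈ ℂⁿ and Q is skew-Hermitian (Qᴴ = −Q). Then the matrix I + P·Q is invertible. -/
open Matrix

/-- If `P` has positive definite real part (`Re⟨Pv,v⟩ > 0` for `v ≠ 0`) and `Q` is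
skew-Hermitian, then `I + P·Q` is invertible. -/
theorem one_add_posRe_mul_skewHermitian_isUnit
    (n : ℕ) (hn : 1 ≤ n) (P Q : Matrix (Fin n) (Fin n) ℂ)
    (hP : ∀ v : Fin n → ℂ, v ≠ 0 → 0 < (star v ⬝ᵥ P.mulVec v).re)
    (hQ : Qᴴ = -Q) :
    IsUnit (1 + P * Q) := by
  rw [Matrix.isUnit_iff_isUnit_det, isUnit_iff_ne_zero]
  intro hdet
  obtain ⟨v, hv0, hv⟩ := (Matrix.exists_mulVec_eq_zero_iff).mpr hdet
  set w : Fin n → ℂ := Q.mulVec v with hw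
  have hsum : v + P.mulVec w = 0 := by
    rw [Matrix.add_mulVec, Matrix.one_mulVec, ← Matrix.mulVec_mulVec] at hv
    exact hv
  have hveq : v = -(P.mulVec w) := eq_neg_of_add_eq_zero_left hsum
  have hw0 : w ≠ 0 := by
    intro h
    apply hv0
    rw [hveq, h, Matrix.mulVec_zero, neg_zero]
  set c : ℂ := star w ⬝ᵥ v with hc
  have h1 : c = -(star w ⬝ᵥ P.mulVec w) := by
    rw [hc, hveq, dotProduct_neg]
  have h2 : c = -(star v ⬝ᵥ w) := by
    rw [hc, hw, Matrix.star_mulVec, hQ, Matrix.vecMul_neg, neg_dotProduct,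
      ← Matrix.dotProduct_mulVec]
  have h3 : star v ⬝ᵥ w = star c := by
    rw [hc, Matrix.star_dotProduct]
  have hre0 : c.re = 0 := by
    have : c = -(star c) := by rw [← h3, ← h2]
    have := congrArg Complex.re this
    simp at this
    linarith
  have hlt : 0 < (star w ⬝ᵥ P.mulVec w).re := hP w hw0
  rw [h1] at hre0
  simp at hre0
  linarith
end
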